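/- arXiv:1010.2577 — 3 statements merged into one kernel-verified Lean document; each statement's English description precedes it below -/
import Mathlib

section
/- Let M be a negative definite symmetric bilinear form on a real vector space V (or more generally negative semi-definite with radical spanned by a vector f). If B ∈ V satisfies B ≠ 0 and B is not proportional to f, then there exists a basis vector (component) E of B with M(B, E) < 0 when B is written as a nonnegative combination of basis vectors each pairing nonnegatively with distinct other basis vectors. -/
/-!
If every component `i` in the support of `b ≥ 0` had `(M b)_i ≥ 0`, then `b ⬝ M b ≥ 0`; with
negative semi-definiteness this forces `b ⬝ M b = 0`, and for a symmetric semi-definite form that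
puts `b` in the radical, i.e. makes `b` proportional to `f`.
-/

open Matrix

namespace Matrix

variable {n : Type*} [Fintype n]

theorem posSemidef_neg_of_dotProduct_mulVec_nonpos {M : Matrix n n ℝ} (hsymm : M.IsSymm)
    (hneg : ∀ v, v ⬝ᵥ M *ᵥ v ≤ 0) : (-M).PosSemidef := by
  rw [posSemidef_iff_dotProduct_mulVec]
  refine ⟨?_, fun v => ?_⟩
  · rw [IsHermitian, conjTranspose_neg, conjTranspose_eq_transpose_of_trivial, hsymm.eq]
  · simpa [neg_mulVec] using hneg v

theorem mulVec_eq_zero_of_dotProduct_mulVec_eq_zero {M : Matrix n n ℝ} (hsymm : M.IsSymm)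
    (hneg : ∀ v, v ⬝ᵥ M *ᵥ v ≤ 0) {v : n → ℝ} (hv : v ⬝ᵥ M *ᵥ v = 0) : M *ᵥ v = 0 := by
  have h := ((posSemidef_neg_of_dotProduct_mulVec_nonpos hsymm hneg).dotProduct_mulVec_zero_iff
    v).mp (by simpa [neg_mulVec] using hv)
  simpa [neg_mulVec] using h

end Matrix

theorem dotProduct_nonneg_of_nonneg_on_support {n : Type*} [Fintype n] {b w : n → ℝ}
    (hb : ∀ i, 0 ≤ b i) (hw : ∀ i, 0 < b i → 0 ≤ w i) : 0 ≤ b ⬝ᵥ w := by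
  refine Finset.sum_nonneg fun i _ => ?_
  rcases (hb i).eq_or_lt with h | h
  · simp [← h]
  · exact mul_nonneg h.le (hw i h)

theorem stmt_3_general {k : ℕ} (M : Matrix (Fin k) (Fin k) ℝ) (hsymm : M.IsSymm)
    (hnegsemi : ∀ v : Fin k → ℝ, v ⬝ᵥ M.mulVec v ≤ 0)
    (f : Fin k → ℝ)
    (hrad : ∀ v : Fin k → ℝ, M.mulVec v = 0 ↔ ∃ c : ℝ, v = c • f)
    (b : Fin k → ℝ) (hb0 : ∀ i, 0 ≤ b i)
    (hbf : ¬∃ c : ℝ, b = c • f) :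
    ∃ i, 0 < b i ∧ M.mulVec b i < 0 := by
  by_contra! h
  have hzero : b ⬝ᵥ M *ᵥ b = 0 :=
    le_antisymm (hnegsemi b) (dotProduct_nonneg_of_nonneg_on_support hb0 h)
  exact hbf ((hrad b).mp (mulVec_eq_zero_of_dotProduct_mulVec_eq_zero hsymm hnegsemi hzero))

/-- Zariski-lemma consequence: for a negative semi-definite symmetric pairing `M`
whose radical is spanned by `f`, any nonnegative vector `b ≠ 0` not proportional
to `f` has a component `i` with `b i > 0` pairing negatively with `b`. -/
theorem stmt_3 {k : ℕ} (M : Matrix (Fin k) (Fin k) ℝ) (hsymm : M.IsSymm)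
    (hnegsemi : ∀ v : Fin k → ℝ, v ⬝ᵥ M.mulVec v ≤ 0)
    (f : Fin k → ℝ)
    (hrad : ∀ v : Fin k → ℝ, M.mulVec v = 0 ↔ ∃ c : ℝ, v = c • f)
    (b : Fin k → ℝ) (hb0 : ∀ i, 0 ≤ b i) (hbne : b ≠ 0)
    (hbf : ¬∃ c : ℝ, b = c • f) :
    ∃ i, 0 < b i ∧ M.mulVec b i < 0 :=
  stmt_3_general M hsymm hnegsemi f hrad b hb0 hbf
end

section
/- Let M be a symmetric, negative semi-definite real k×k matrix whose kernel is spanned by a positive vector f. If b is a vector with all entries nonnegative and Mb has all entries nonnegative (i.e., Mb ≥ 0 componentwise, using that b pairs nonnegatively with each coordinate vector), then Mb = 0 and b is proportional to f. -/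
open Matrix

theorem Matrix.posSemidef_neg_of_dotProduct_mulVec_nonpos_s6 {n : Type*} [Fintype n]
    {M : Matrix n n ℝ} (hM : M.IsSymm) (hneg : ∀ v, v ⬝ᵥ M *ᵥ v ≤ 0) : (-M).PosSemidef :=
  .of_dotProduct_mulVec_nonneg (isHermitian_iff_isSymm.mpr hM).neg fun v => by
    simpa [neg_mulVec] using hneg v

/-- `b ⬝ᵥ M b` is both `≤ 0` and, termwise, `≥ 0`; for a semidefinite form an isotropic vector
lies in the kernel. -/
theorem Matrix.mulVec_eq_zero_of_nonneg_of_mulVec_nonneg {n : Type*} [Fintype n]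
    {M : Matrix n n ℝ} (hM : M.IsSymm) (hneg : ∀ v, v ⬝ᵥ M *ᵥ v ≤ 0) {b : n → ℝ}
    (hb : ∀ i, 0 ≤ b i) (hMb : ∀ i, 0 ≤ (M *ᵥ b) i) : M *ᵥ b = 0 := by
  have hquad : b ⬝ᵥ M *ᵥ b = 0 :=
    (hneg b).antisymm <| Finset.sum_nonneg fun i _ => mul_nonneg (hb i) (hMb i)
  have hnegM := posSemidef_neg_of_dotProduct_mulVec_nonpos_s6 hM hneg
  simpa [neg_mulVec, hquad] using (hnegM.dotProduct_mulVec_zero_iff b).mp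

theorem stmt_6_general {k : ℕ} (M : Matrix (Fin k) (Fin k) ℝ) (hsymm : M.IsSymm)
    (hnegsemi : ∀ v : Fin k → ℝ, v ⬝ᵥ M.mulVec v ≤ 0)
    (f : Fin k → ℝ)
    (hker : ∀ v : Fin k → ℝ, M.mulVec v = 0 ↔ ∃ c : ℝ, v = c • f)
    (b : Fin k → ℝ) (hb0 : ∀ i, 0 ≤ b i) (hMb : ∀ i, 0 ≤ M.mulVec b i) :
    M.mulVec b = 0 ∧ ∃ c : ℝ, b = c • f := by
  have hMb0 := mulVec_eq_zero_of_nonneg_of_mulVec_nonneg hsymm hnegsemi hb0 hMb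
  exact ⟨hMb0, (hker b).mp hMb0⟩

/-- A nonnegative vector `b` with `M b ≥ 0` componentwise, for `M` symmetric
negative semi-definite with kernel spanned by a positive vector `f`,
satisfies `M b = 0` and `b` is proportional to `f`. -/
theorem stmt_6 {k : ℕ} (M : Matrix (Fin k) (Fin k) ℝ) (hsymm : M.IsSymm)
    (hnegsemi : ∀ v : Fin k → ℝ, v ⬝ᵥ M.mulVec v ≤ 0)
    (f : Fin k → ℝ) (hf : ∀ i, 0 < f i)
    (hker : ∀ v : Fin k → ℝ, M.mulVec v = 0 ↔ ∃ c : ℝ, v = c • f)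
    (b : Fin k → ℝ) (hb0 : ∀ i, 0 ≤ b i) (hMb : ∀ i, 0 ≤ M.mulVec b i) :
    M.mulVec b = 0 ∧ ∃ c : ℝ, b = c • f :=
  stmt_6_general M hsymm hnegsemi f hker b hb0 hMb
end

section
/- Let M be a negative definite symmetric real k×k matrix with m_{ij} ≥ 0 for all i ≠ j. If b ∈ ℝᵏ satisfies (Mb)ᵢ ≥ 0 for all i, then bᵢ ≤ 0 for all i. -/
/-!
Write `b = b⁺ - b⁻`. Then `b⁺ ⬝ M b⁺ = b⁺ ⬝ M b + b⁺ ⬝ M b⁻`. The first term is nonnegative because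
`b⁺ ≥ 0` and `M b ≥ 0`; in the second, `b⁺` and `b⁻` have disjoint supports, so only the
nonnegative off-diagonal entries of `M` contribute. Negative definiteness then forces `b⁺ = 0`.
-/

open Matrix

variable {n R : Type*} [Fintype n] [CommRing R] [LinearOrder R] [IsStrictOrderedRing R]

lemma posPart_mul_negPart_eq_zero (a : R) : a⁺ * a⁻ = 0 := by
  rcases le_total a 0 with h | h
  · rw [posPart_eq_zero.mpr h, zero_mul]
  · rw [negPart_eq_zero.mpr h, mul_zero]

lemma dotProduct_mulVec_nonneg_of_offDiag_nonneg {M : Matrix n n R}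
    (hoff : ∀ i j, i ≠ j → 0 ≤ M i j) {x y : n → R} (hx : 0 ≤ x) (hy : 0 ≤ y)
    (hxy : ∀ i, x i * y i = 0) : 0 ≤ x ⬝ᵥ M *ᵥ y := by
  refine Finset.sum_nonneg fun i _ => ?_
  rw [mulVec, dotProduct, Finset.mul_sum]
  refine Finset.sum_nonneg fun j _ => ?_
  by_cases hij : i = j
  · subst hij
    rw [mul_left_comm, hxy i, mul_zero]
  · exact mul_nonneg (hx i) (mul_nonneg (hoff i j hij) (hy j))

lemma posPart_dotProduct_mulVec_posPart_nonneg {M : Matrix n n R}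
    (hoff : ∀ i j, i ≠ j → 0 ≤ M i j) {b : n → R} (hMb : 0 ≤ M *ᵥ b) :
    0 ≤ b⁺ ⬝ᵥ M *ᵥ b⁺ := by
  have hsplit : b⁺ = b + b⁻ := sub_eq_iff_eq_add.mp (posPart_sub_negPart b)
  calc 0 ≤ b⁺ ⬝ᵥ M *ᵥ b + b⁺ ⬝ᵥ M *ᵥ b⁻ :=
        add_nonneg (dotProduct_nonneg_of_nonneg (posPart_nonneg b) hMb)
          (dotProduct_mulVec_nonneg_of_offDiag_nonneg hoff (posPart_nonneg b) (negPart_nonneg b)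
            fun i => posPart_mul_negPart_eq_zero (b i))
    _ = b⁺ ⬝ᵥ M *ᵥ b⁺ := by rw [← dotProduct_add, ← mulVec_add, ← hsplit]

theorem nonpos_of_mulVec_nonneg_of_negDef {M : Matrix n n R}
    (hoff : ∀ i j, i ≠ j → 0 ≤ M i j) (hnegdef : ∀ v : n → R, v ≠ 0 → v ⬝ᵥ M *ᵥ v < 0)
    {b : n → R} (hMb : 0 ≤ M *ᵥ b) : b ≤ 0 := by
  refine posPart_eq_zero.mp ?_
  by_contra hpos
  exact (hnegdef _ hpos).not_ge (posPart_dotProduct_mulVec_posPart_nonneg hoff hMb)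

theorem stmt_15_general {k : ℕ} (M : Matrix (Fin k) (Fin k) ℝ)
    (hoff : ∀ i j, i ≠ j → 0 ≤ M i j)
    (hnegdef : ∀ v : Fin k → ℝ, v ≠ 0 → v ⬝ᵥ M.mulVec v < 0)
    (b : Fin k → ℝ) (hMb : ∀ i, 0 ≤ M.mulVec b i) :
    ∀ i, b i ≤ 0 :=
  nonpos_of_mulVec_nonneg_of_negDef hoff hnegdef hMb

/-- Negativity lemma: for a negative definite symmetric real matrix with
nonnegative off-diagonal entries, `M b ≥ 0` componentwise implies `b ≤ 0`. -/
theorem stmt_15 {k : ℕ} (M : Matrix (Fin k) (Fin k) ℝ) (hsymm : M.IsSymm)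
    (hoff : ∀ i j, i ≠ j → 0 ≤ M i j)
    (hnegdef : ∀ v : Fin k → ℝ, v ≠ 0 → v ⬝ᵥ M.mulVec v < 0)
    (b : Fin k → ℝ) (hMb : ∀ i, 0 ≤ M.mulVec b i) :
    ∀ i, b i ≤ 0 :=
  stmt_15_general M hoff hnegdef b hMb
end
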